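/- Let T > 0, β ∈ (0,1), C > 0, and let f, h : (0,T) → [0,∞) be measurable with f ∈ L²((0,T)), h ∈ L²((0,T)), satisfying f(t) ≤ h(t) + C ∫₀ᵗ (t-s)^{β-1} f(s) ds for a.e. t. Then ‖f‖_{L²(0,T)} ≤ C' ‖h‖_{L²(0,T)} with C' depending only on C, β, T. -/

import Mathlib

open MeasureTheory Set ENNReal Filter Topology


lemma subst_sub (k : ℝ → ℝ≥0∞) (hk : Measurable k) (t : ℝ) :
    ∫⁻ s in Ioo 0 t, k (t - s) = ∫⁻ u in Ioo 0 t, k u := by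
  have hmp : MeasurePreserving (fun s : ℝ => t - s) volume volume :=
    Measure.measurePreserving_sub_left volume t
  have hpre : (fun s : ℝ => t - s) ⁻¹' (Ioo 0 t) = Ioo 0 t := by
    ext x; simp only [mem_preimage, mem_Ioo]; constructor <;> intro h <;>
      constructor <;> linarith [h.1, h.2]
  have := hmp.setLIntegral_comp_preimage (s := Ioo 0 t) measurableSet_Ioo hk
  rwa [hpre] at this

lemma subst_add (k : ℝ → ℝ≥0∞) (hk : Measurable k) (s T : ℝ) :
    ∫⁻ t in Ioo s T, k (t - s) = ∫⁻ u in Ioo 0 (T - s), k u := by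
  have hmp : MeasurePreserving (fun u : ℝ => u + s) volume volume :=
    measurePreserving_add_right volume s
  have hpre : (fun u : ℝ => u + s) ⁻¹' (Ioo s T) = Ioo 0 (T - s) := by
    ext x; simp only [mem_preimage, mem_Ioo]; constructor <;> intro h <;>
      constructor <;> linarith [h.1, h.2]
  have := hmp.setLIntegral_comp_preimage (s := Ioo s T) measurableSet_Ioo
    (f := fun u => k (u - s)) (by exact hk.comp (measurable_id.sub measurable_const))
  simp only [add_sub_cancel_right] at this
  rw [← this, hpre]

lemma young_L2 {T : ℝ} (k g : ℝ → ℝ≥0∞) (hk : Measurable k) (hg : Measurable g) :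
    ∫⁻ t in Ioo 0 T, (∫⁻ s in Ioo 0 t, k (t - s) * g s) ^ (2:ℝ)
      ≤ (∫⁻ u in Ioo 0 T, k u) ^ (2:ℝ) * ∫⁻ s in Ioo 0 T, g s ^ (2:ℝ) := by
  set A := ∫⁻ u in Ioo 0 T, k u with hA
  set Φ : ℝ → ℝ → ℝ≥0∞ :=
    fun t s => (Ioo 0 t).indicator (fun s => k (t - s) * g s ^ (2:ℝ)) s with hΦdef
  have hg2 : Measurable fun s => g s ^ (2:ℝ) := hg.pow_const _
  have hΦmeas : Measurable (Function.uncurry Φ) := by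
    have : Function.uncurry Φ = fun p : ℝ × ℝ =>
        Set.indicator {q : ℝ × ℝ | 0 < q.2 ∧ q.2 < q.1}
          (fun q => k (q.1 - q.2) * g q.2 ^ (2:ℝ)) p := by
      ext ⟨t, s⟩
      simp only [Function.uncurry_apply_pair]
      simp only [hΦdef]
      by_cases hp : 0 < s ∧ s < t
      · rw [indicator_of_mem (mem_Ioo.2 hp),
          indicator_of_mem (show ((t,s) : ℝ × ℝ) ∈ {q : ℝ × ℝ | 0 < q.2 ∧ q.2 < q.1} from hp)]
      · rw [indicator_of_notMem (fun hmem => hp (mem_Ioo.1 hmem)),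
          indicator_of_notMem
            (show ((t,s) : ℝ × ℝ) ∉ {q : ℝ × ℝ | 0 < q.2 ∧ q.2 < q.1} from hp)]
    rw [this]
    exact Measurable.indicator
      ((hk.comp (measurable_fst.sub measurable_snd)).mul
        ((hg.comp measurable_snd).pow_const _))
      ((measurableSet_lt measurable_const measurable_snd).inter
        (measurableSet_lt measurable_snd measurable_fst))
  have hΨmeas : Measurable fun t => ∫⁻ s, Φ t s := hΦmeas.lintegral_prod_right
  have hconj : Real.HolderConjugate 2 2 := .two_two
  have key : ∀ t ∈ Ioo 0 T,
      (∫⁻ s in Ioo 0 t, k (t - s) * g s) ^ (2:ℝ) ≤ A * ∫⁻ s, Φ t s := by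
    intro t ht
    have hkt : Measurable fun s => k (t - s) := hk.comp (measurable_const.sub measurable_id)
    have h1 : ∫⁻ s in Ioo 0 t, k (t - s) * g s
        ≤ (∫⁻ s in Ioo 0 t, k (t - s)) ^ ((1:ℝ)/2)
          * (∫⁻ s in Ioo 0 t, k (t - s) * g s ^ (2:ℝ)) ^ ((1:ℝ)/2) := by
      have H := ENNReal.lintegral_mul_le_Lp_mul_Lq (volume.restrict (Ioo 0 t)) hconj
        (f := fun s => (k (t - s)) ^ ((1:ℝ)/2))
        (g := fun s => (k (t - s)) ^ ((1:ℝ)/2) * g s)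
        (hkt.pow_const _).aemeasurable ((hkt.pow_const _).mul hg).aemeasurable
      calc ∫⁻ s in Ioo 0 t, k (t - s) * g s
          = ∫⁻ s in Ioo 0 t,
              ((fun s => (k (t-s)) ^ ((1:ℝ)/2)) * fun s => (k (t-s)) ^ ((1:ℝ)/2) * g s) s := by
            apply lintegral_congr; intro s
            simp only [Pi.mul_apply]
            rw [← mul_assoc, ← ENNReal.rpow_add_of_nonneg _ _ (by norm_num) (by norm_num)]
            norm_num
        _ ≤ (∫⁻ s in Ioo 0 t, ((k (t - s)) ^ ((1:ℝ)/2)) ^ (2:ℝ)) ^ (1/(2:ℝ))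
            * (∫⁻ s in Ioo 0 t, ((k (t - s)) ^ ((1:ℝ)/2) * g s) ^ (2:ℝ)) ^ (1/(2:ℝ)) := H
        _ = (∫⁻ s in Ioo 0 t, k (t - s)) ^ ((1:ℝ)/2)
            * (∫⁻ s in Ioo 0 t, k (t - s) * g s ^ (2:ℝ)) ^ ((1:ℝ)/2) := by
            congr 1
            · congr 1
              apply lintegral_congr; intro s
              rw [← ENNReal.rpow_mul]; norm_num
            · congr 1
              apply lintegral_congr; intro s
              rw [ENNReal.mul_rpow_of_nonneg _ _ (by norm_num : (0:ℝ) ≤ 2),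
                ← ENNReal.rpow_mul]
              norm_num
    have hX : ∫⁻ s in Ioo 0 t, k (t - s) ≤ A := by
      rw [subst_sub k hk t]
      exact lintegral_mono_set (Ioo_subset_Ioo_right ht.2.le)
    have hY : ∫⁻ s in Ioo 0 t, k (t - s) * g s ^ (2:ℝ) = ∫⁻ s, Φ t s := by
      rw [hΦdef]
      exact (lintegral_indicator measurableSet_Ioo _).symm
    calc (∫⁻ s in Ioo 0 t, k (t - s) * g s) ^ (2:ℝ)
        ≤ ((∫⁻ s in Ioo 0 t, k (t - s)) ^ ((1:ℝ)/2)
          * (∫⁻ s in Ioo 0 t, k (t - s) * g s ^ (2:ℝ)) ^ ((1:ℝ)/2)) ^ (2:ℝ) :=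
          ENNReal.rpow_le_rpow h1 (by norm_num)
      _ = (∫⁻ s in Ioo 0 t, k (t - s)) * (∫⁻ s in Ioo 0 t, k (t - s) * g s ^ (2:ℝ)) := by
          rw [ENNReal.mul_rpow_of_nonneg _ _ (by norm_num : (0:ℝ) ≤ 2),
            ← ENNReal.rpow_mul, ← ENNReal.rpow_mul]
          norm_num
      _ ≤ A * ∫⁻ s, Φ t s := by rw [hY]; exact mul_le_mul_left hX _
  calc ∫⁻ t in Ioo 0 T, (∫⁻ s in Ioo 0 t, k (t - s) * g s) ^ (2:ℝ)
      ≤ ∫⁻ t in Ioo 0 T, A * ∫⁻ s, Φ t s := setLIntegral_mono' measurableSet_Ioo key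
    _ = A * ∫⁻ t in Ioo 0 T, ∫⁻ s, Φ t s := lintegral_const_mul A hΨmeas
    _ = A * ∫⁻ s, ∫⁻ t in Ioo 0 T, Φ t s := by
        rw [lintegral_lintegral_swap hΦmeas.aemeasurable]
    _ ≤ A * ∫⁻ s, (Ioo 0 T).indicator (fun s => A * g s ^ (2:ℝ)) s := by
        refine mul_le_mul_right (lintegral_mono fun s => ?_) A
        by_cases hs : s ∈ Ioo 0 T
        · rw [indicator_of_mem hs]
          have heq : ∀ t, Φ t s = (Ioi s).indicator (fun t => k (t - s) * g s ^ (2:ℝ)) t := by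
            intro t
            simp only [hΦdef]
            by_cases hst : s < t
            · rw [indicator_of_mem (show s ∈ Ioo 0 t from ⟨hs.1, hst⟩),
                indicator_of_mem (show t ∈ Ioi s from hst)]
            · rw [indicator_of_notMem (show s ∉ Ioo 0 t from fun hmem => hst hmem.2),
                indicator_of_notMem (show t ∉ Ioi s from hst)]
          calc ∫⁻ t in Ioo 0 T, Φ t s
              = ∫⁻ t in Ioo 0 T, (Ioi s).indicator (fun t => k (t - s) * g s ^ (2:ℝ)) t :=
                lintegral_congr fun t => heq t
            _ = ∫⁻ t in Ioo 0 T ∩ Ioi s, k (t - s) * g s ^ (2:ℝ) := by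
                rw [lintegral_indicator measurableSet_Ioi, Measure.restrict_restrict measurableSet_Ioi]
                rw [inter_comm]
            _ = ∫⁻ t in Ioo s T, k (t - s) * g s ^ (2:ℝ) := by
                have hset : Ioo 0 T ∩ Ioi s = Ioo s T := by
                  ext x
                  simp only [mem_inter_iff, mem_Ioo, mem_Ioi]
                  constructor
                  · rintro ⟨⟨h1, h2⟩, h3⟩; exact ⟨h3, h2⟩
                  · rintro ⟨h1, h2⟩; exact ⟨⟨lt_trans hs.1 h1, h2⟩, h1⟩
                rw [hset]
            _ = (∫⁻ t in Ioo s T, k (t - s)) * g s ^ (2:ℝ) := by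
                exact lintegral_mul_const _
                  (show Measurable fun t : ℝ => k (t - s) from
                    hk.comp (measurable_id.sub measurable_const))
            _ = (∫⁻ u in Ioo 0 (T - s), k u) * g s ^ (2:ℝ) := by rw [subst_add k hk]
            _ ≤ A * g s ^ (2:ℝ) := by
                refine mul_le_mul_left (lintegral_mono_set ?_) _
                exact Ioo_subset_Ioo_right (by linarith [hs.1])
        · rw [indicator_of_notMem hs]
          refine le_of_eq ?_
          have hzero : ∀ t ∈ Ioo 0 T, Φ t s = 0 := by
            intro t ht
            simp only [hΦdef]
            apply indicator_of_notMem
            simp only [mem_Ioo, not_and_or, not_lt] at hs ⊢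
            rcases hs with h | h
            · left; exact h
            · right; linarith [ht.2]
          calc ∫⁻ t in Ioo 0 T, Φ t s = ∫⁻ _ in Ioo 0 T, (0:ℝ≥0∞) :=
                setLIntegral_congr_fun measurableSet_Ioo hzero
            _ = 0 := lintegral_zero
    _ = A * (A * ∫⁻ s in Ioo 0 T, g s ^ (2:ℝ)) := by
        rw [lintegral_indicator measurableSet_Ioo, lintegral_const_mul A hg2]
    _ = A ^ (2:ℝ) * ∫⁻ s in Ioo 0 T, g s ^ (2:ℝ) := by
        rw [← mul_assoc, show (2:ℝ) = ((2:ℕ):ℝ) by norm_num, ENNReal.rpow_natCast, sq]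

lemma kernel_small {T β C : ℝ} (hT : 0 < T) (hβ : β ∈ Set.Ioo (0:ℝ) 1) (hC : 0 < C) :
    ∃ n : ℕ, ∫⁻ u in Ioo 0 T,
      ENNReal.ofReal (C * u ^ (β-1) * Real.exp (-(n:ℝ) * u)) ≤ 2⁻¹ := by
  set μ := volume.restrict (Ioo (0:ℝ) T)
  have hrpow_meas : Measurable fun u : ℝ => u ^ (β - 1) :=
    measurable_id.pow_const (β - 1)
  have hFmeas : ∀ n : ℕ,
      Measurable fun u : ℝ => ENNReal.ofReal (C * u ^ (β-1) * Real.exp (-(n:ℝ) * u)) := by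
    intro n
    exact ((( measurable_const.mul hrpow_meas).mul
      (Real.measurable_exp.comp (measurable_const.mul measurable_id)))).ennreal_ofReal
  have hint : IntegrableOn (fun u : ℝ => C * u ^ (β-1)) (Ioo 0 T) volume := by
    have h1 : IntervalIntegrable (fun u : ℝ => u ^ (β-1)) volume 0 T :=
      intervalIntegral.intervalIntegrable_rpow' (by linarith [hβ.1])
    have h2 : IntegrableOn (fun u : ℝ => u ^ (β-1)) (Ioc 0 T) volume := by
      rw [intervalIntegrable_iff, uIoc_of_le hT.le] at h1
      exact h1
    exact (h2.mono_set Ioo_subset_Ioc_self).const_mul C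
  have hbound_fin : ∫⁻ u, ENNReal.ofReal (C * u ^ (β-1)) ∂μ ≠ ∞ :=
    hint.lintegral_lt_top.ne
  have h_bound : ∀ n : ℕ, (fun u : ℝ => ENNReal.ofReal (C * u ^ (β-1) * Real.exp (-(n:ℝ) * u)))
      ≤ᵐ[μ] fun u => ENNReal.ofReal (C * u ^ (β-1)) := by
    intro n
    filter_upwards [ae_restrict_mem measurableSet_Ioo] with u hu
    apply ENNReal.ofReal_le_ofReal
    have h1 : 0 ≤ C * u ^ (β-1) :=
      mul_nonneg hC.le (Real.rpow_nonneg hu.1.le _)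
    have he : Real.exp (-(n:ℝ) * u) ≤ 1 :=
      Real.exp_le_one_iff.2 (by nlinarith [hu.1, Nat.cast_nonneg (α := ℝ) n])
    nlinarith [Real.exp_pos (-(n:ℝ) * u)]
  have h_lim : ∀ᵐ u ∂μ, Filter.Tendsto
      (fun n : ℕ => ENNReal.ofReal (C * u ^ (β-1) * Real.exp (-(n:ℝ) * u)))
      Filter.atTop (𝓝 ((fun _ => (0:ℝ≥0∞)) u)) := by
    filter_upwards [ae_restrict_mem measurableSet_Ioo] with u hu
    have hexp : Filter.Tendsto (fun n : ℕ => Real.exp (-(n:ℝ) * u)) Filter.atTop (𝓝 0) := by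
      have : ∀ n : ℕ, Real.exp (-(n:ℝ) * u) = Real.exp (-u) ^ n := by
        intro n
        rw [← Real.exp_nat_mul]
        ring_nf
      simp_rw [this]
      exact tendsto_pow_atTop_nhds_zero_of_lt_one (Real.exp_nonneg _)
        (Real.exp_lt_one_iff.2 (by linarith [hu.1]))
    have : Filter.Tendsto (fun n : ℕ => C * u ^ (β-1) * Real.exp (-(n:ℝ) * u))
        Filter.atTop (𝓝 0) := by
      have := hexp.const_mul (C * u ^ (β-1))
      simpa using this
    have h2 := (ENNReal.continuous_ofReal.tendsto 0).comp this
    simpa [Function.comp_def] using h2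
  have hT2 : Filter.Tendsto
      (fun n : ℕ => ∫⁻ u, ENNReal.ofReal (C * u ^ (β-1) * Real.exp (-(n:ℝ) * u)) ∂μ)
      Filter.atTop (𝓝 0) := by
    have := tendsto_lintegral_of_dominated_convergence
      (μ := μ) (bound := fun u => ENNReal.ofReal (C * u ^ (β-1)))
      hFmeas h_bound hbound_fin h_lim
    simpa using this
  have := (hT2.eventually_lt_const (by norm_num : (0:ℝ≥0∞) < 2⁻¹)).exists
  obtain ⟨n, hn⟩ := this
  exact ⟨n, hn.le⟩

lemma conv_measurable (k g : ℝ → ℝ≥0∞) (hk : Measurable k) (hg : Measurable g) :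
    Measurable fun t => ∫⁻ s in Ioo 0 t, k (t - s) * g s := by
  have heq : (fun t => ∫⁻ s in Ioo 0 t, k (t - s) * g s)
      = fun t => ∫⁻ s, (fun t s => (Ioo 0 t).indicator (fun s => k (t - s) * g s) s) t s := by
    ext t
    rw [lintegral_indicator measurableSet_Ioo]
  rw [heq]
  refine Measurable.lintegral_prod_right ?_
  have huncurry : (Function.uncurry fun t s => (Ioo 0 t).indicator (fun s => k (t - s) * g s) s)
      = fun p : ℝ × ℝ => Set.indicator {q : ℝ × ℝ | 0 < q.2 ∧ q.2 < q.1}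
          (fun q => k (q.1 - q.2) * g q.2) p := by
    ext ⟨t, s⟩
    simp only [Function.uncurry_apply_pair]
    by_cases hp : 0 < s ∧ s < t
    · rw [indicator_of_mem (mem_Ioo.2 hp),
        indicator_of_mem (show ((t,s) : ℝ × ℝ) ∈ {q : ℝ × ℝ | 0 < q.2 ∧ q.2 < q.1} from hp)]
    · rw [indicator_of_notMem (fun hmem => hp (mem_Ioo.1 hmem)),
        indicator_of_notMem
          (show ((t,s) : ℝ × ℝ) ∉ {q : ℝ × ℝ | 0 < q.2 ∧ q.2 < q.1} from hp)]
  rw [huncurry]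
  exact Measurable.indicator
    ((hk.comp (measurable_fst.sub measurable_snd)).mul (hg.comp measurable_snd))
    ((measurableSet_lt measurable_const measurable_snd).inter
      (measurableSet_lt measurable_snd measurable_fst))


/-- Singular Gronwall plus Young: if `f ≤ h + C ∫₀ᵗ (t-s)^{β-1} f(s) ds` a.e. on `(0,T)` with
`f, h ∈ L²(0,T)` nonnegative, then `‖f‖_{L²} ≤ C' ‖h‖_{L²}`. -/
theorem l2_bound_of_singular_gronwall (T β C : ℝ) (hT : 0 < T) (hβ : β ∈ Set.Ioo (0:ℝ) 1)
    (hC : 0 < C) :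
    ∃ C' > 0, ∀ f h : ℝ → ℝ,
      Measurable f → Measurable h →
      (∀ t, 0 ≤ f t) → (∀ t, 0 ≤ h t) →
      MemLp f 2 (volume.restrict (Ioo 0 T)) → MemLp h 2 (volume.restrict (Ioo 0 T)) →
      (∀ᵐ t ∂(volume.restrict (Ioo 0 T)),
        f t ≤ h t + C * ∫ s in Ioo 0 t, (t - s) ^ (β - 1) * f s) →
      eLpNorm f 2 (volume.restrict (Ioo 0 T))
        ≤ ENNReal.ofReal C' * eLpNorm h 2 (volume.restrict (Ioo 0 T)) := by
  obtain ⟨n, hn⟩ := kernel_small hT hβ hC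
  set lam : ℝ := (n : ℝ) with hlam
  have hlam0 : 0 ≤ lam := Nat.cast_nonneg n
  set K : ℝ → ℝ≥0∞ := fun u => ENNReal.ofReal (C * u ^ (β-1) * Real.exp (-lam * u)) with hKdef
  have hKmeas : Measurable K :=
    ((measurable_const.mul (measurable_id.pow_const (β - 1))).mul
      (Real.measurable_exp.comp (measurable_const.mul measurable_id))).ennreal_ofReal
  have hKA : ∫⁻ u in Ioo 0 T, K u ≤ 2⁻¹ := hn
  refine ⟨2 * Real.exp (lam * T), by positivity, ?_⟩
  intro f h hfm hhm hf0 hh0 hfL2 hhL2 hineq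
  set μ := volume.restrict (Ioo (0:ℝ) T) with hμ
  set F : ℝ → ℝ≥0∞ := fun t => ENNReal.ofReal (f t) with hFdef
  set H : ℝ → ℝ≥0∞ := fun t => ENNReal.ofReal (h t) with hHdef
  set G : ℝ → ℝ≥0∞ := fun t => ENNReal.ofReal (Real.exp (-lam * t) * f t) with hGdef
  have hFmeas : Measurable F := hfm.ennreal_ofReal
  have hHmeas : Measurable H := hhm.ennreal_ofReal
  have hGmeas : Measurable G :=
    ((Real.measurable_exp.comp (measurable_const.mul measurable_id)).mul hfm).ennreal_ofReal
  set Conv : ℝ → ℝ≥0∞ := fun t => ∫⁻ s in Ioo 0 t, K (t - s) * G s with hConvdef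
  have hConvmeas : Measurable Conv := conv_measurable K G hKmeas hGmeas
  -- norms
  have hnorm : ∀ (φ : ℝ → ℝ), (∀ t, 0 ≤ φ t) →
      eLpNorm φ 2 μ = (∫⁻ t, ENNReal.ofReal (φ t) ^ (2:ℝ) ∂μ) ^ ((1:ℝ)/2) := by
    intro φ hφ
    rw [eLpNorm_eq_lintegral_rpow_enorm_toReal (by norm_num) (by norm_num)]
    simp only [ENNReal.toReal_ofNat]
    congr 1
    apply lintegral_congr; intro t
    rw [← Real.enorm_eq_ofReal (hφ t)]
  -- a.e. pointwise inequality
  have hptwise : ∀ᵐ t ∂μ, G t ≤ H t + Conv t := by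
    filter_upwards [hineq, ae_restrict_mem measurableSet_Ioo] with t hle ht
    set I := ∫ s in Ioo 0 t, (t - s) ^ (β - 1) * f s with hIdef
    have hI0 : 0 ≤ I := by
      apply setIntegral_nonneg measurableSet_Ioo
      intro s hs
      exact mul_nonneg (Real.rpow_nonneg (by linarith [hs.2]) _) (hf0 s)
    have hFle : F t ≤ H t + ENNReal.ofReal C
        * ∫⁻ s in Ioo 0 t, ENNReal.ofReal ((t - s) ^ (β - 1)) * F s := by
      have h1 : F t ≤ H t + ENNReal.ofReal C * ENNReal.ofReal I := by
        calc F t ≤ ENNReal.ofReal (h t + C * I) := ENNReal.ofReal_le_ofReal hle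
          _ = H t + ENNReal.ofReal (C * I) :=
            ENNReal.ofReal_add (hh0 t) (mul_nonneg hC.le hI0)
          _ = H t + ENNReal.ofReal C * ENNReal.ofReal I := by
            rw [ENNReal.ofReal_mul hC.le]
      have h2 : ENNReal.ofReal I
          ≤ ∫⁻ s in Ioo 0 t, ENNReal.ofReal ((t - s) ^ (β - 1) * f s) := by
        by_cases hint : IntegrableOn (fun s => (t - s) ^ (β - 1) * f s) (Ioo 0 t) volume
        · rw [hIdef, ofReal_integral_eq_lintegral_ofReal hint]
          filter_upwards [ae_restrict_mem measurableSet_Ioo] with s hs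
          exact mul_nonneg (Real.rpow_nonneg (by linarith [hs.2]) _) (hf0 s)
        · rw [hIdef, integral_undef hint]
          simp
      have h3 : ∫⁻ s in Ioo 0 t, ENNReal.ofReal ((t - s) ^ (β - 1) * f s)
          = ∫⁻ s in Ioo 0 t, ENNReal.ofReal ((t - s) ^ (β - 1)) * F s := by
        apply setLIntegral_congr_fun measurableSet_Ioo
        intro s hs
        dsimp only
        rw [ENNReal.ofReal_mul (Real.rpow_nonneg (by linarith [hs.2]) _)]
      calc F t ≤ H t + ENNReal.ofReal C * ENNReal.ofReal I := h1
        _ ≤ H t + ENNReal.ofReal C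
            * ∫⁻ s in Ioo 0 t, ENNReal.ofReal ((t - s) ^ (β - 1)) * F s := by
          rw [← h3]
          exact add_le_add_right (mul_le_mul_right h2 _) _
    have hGF : G t = ENNReal.ofReal (Real.exp (-lam * t)) * F t := by
      simp only [hGdef, hFdef]
      rw [ENNReal.ofReal_mul (Real.exp_nonneg _)]
    have hexp_le_one : ENNReal.ofReal (Real.exp (-lam * t)) ≤ 1 := by
      rw [show (1:ℝ≥0∞) = ENNReal.ofReal 1 by simp]
      exact ENNReal.ofReal_le_ofReal (Real.exp_le_one_iff.2 (by nlinarith [ht.1]))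
    calc G t = ENNReal.ofReal (Real.exp (-lam * t)) * F t := hGF
      _ ≤ ENNReal.ofReal (Real.exp (-lam * t)) * (H t + ENNReal.ofReal C
          * ∫⁻ s in Ioo 0 t, ENNReal.ofReal ((t - s) ^ (β - 1)) * F s) :=
        mul_le_mul_right hFle _
      _ = ENNReal.ofReal (Real.exp (-lam * t)) * H t
          + ENNReal.ofReal (Real.exp (-lam * t)) * ENNReal.ofReal C
          * ∫⁻ s in Ioo 0 t, ENNReal.ofReal ((t - s) ^ (β - 1)) * F s := by
        rw [mul_add, mul_assoc]
      _ ≤ H t + Conv t := by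
        apply add_le_add
        · exact mul_le_of_le_one_left' hexp_le_one
        · refine le_of_eq ?_
          have hker : ∀ s ∈ Ioo 0 t,
              ENNReal.ofReal (Real.exp (-lam * t)) * ENNReal.ofReal C
                * (ENNReal.ofReal ((t - s) ^ (β - 1)) * F s) = K (t - s) * G s := by
            intro s hs
            have hx : (0:ℝ) ≤ (t - s) ^ (β - 1) := Real.rpow_nonneg (by linarith [hs.2]) _
            simp only [hKdef, hGdef, hFdef]
            rw [← ENNReal.ofReal_mul (Real.exp_nonneg _),
              ← ENNReal.ofReal_mul hx,
              ← ENNReal.ofReal_mul (mul_nonneg (Real.exp_nonneg _) hC.le),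
              ← ENNReal.ofReal_mul (mul_nonneg (mul_nonneg hC.le hx) (Real.exp_nonneg _))]
            congr 1
            have hsplit : Real.exp (-lam * t)
                = Real.exp (-lam * (t - s)) * Real.exp (-lam * s) := by
              rw [← Real.exp_add]; ring_nf
            rw [hsplit]; ring
          have hmeas2 : Measurable fun s => ENNReal.ofReal ((t - s) ^ (β - 1)) * F s :=
            (((measurable_const.sub measurable_id).pow_const (β-1)).ennreal_ofReal).mul hFmeas
          calc ENNReal.ofReal (Real.exp (-lam * t)) * ENNReal.ofReal C
              * ∫⁻ s in Ioo 0 t, ENNReal.ofReal ((t - s) ^ (β - 1)) * F s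
              = ∫⁻ s in Ioo 0 t, ENNReal.ofReal (Real.exp (-lam * t)) * ENNReal.ofReal C
                * (ENNReal.ofReal ((t - s) ^ (β - 1)) * F s) :=
                (lintegral_const_mul _ hmeas2).symm
            _ = ∫⁻ s in Ioo 0 t, K (t - s) * G s :=
                setLIntegral_congr_fun measurableSet_Ioo hker
            _ = Conv t := rfl
  -- notation for the L² quantities
  set NF := (∫⁻ t, F t ^ (2:ℝ) ∂μ) ^ ((1:ℝ)/2) with hNF
  set NH := (∫⁻ t, H t ^ (2:ℝ) ∂μ) ^ ((1:ℝ)/2) with hNH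
  set NG := (∫⁻ t, G t ^ (2:ℝ) ∂μ) ^ ((1:ℝ)/2) with hNG
  set NC := (∫⁻ t, Conv t ^ (2:ℝ) ∂μ) ^ ((1:ℝ)/2) with hNC
  have hNG_le : NG ≤ NH + NC := by
    have h1 : ∫⁻ t, G t ^ (2:ℝ) ∂μ ≤ ∫⁻ t, (H t + Conv t) ^ (2:ℝ) ∂μ :=
      lintegral_mono_ae (hptwise.mono fun t ht => ENNReal.rpow_le_rpow ht (by norm_num))
    have h2 : (∫⁻ t, (H t + Conv t) ^ (2:ℝ) ∂μ) ^ ((1:ℝ)/2) ≤ NH + NC := by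
      have := ENNReal.lintegral_Lp_add_le (μ := μ) (p := (2:ℝ))
        hHmeas.aemeasurable hConvmeas.aemeasurable one_le_two
      simpa [hNH, hNC] using this
    exact le_trans (ENNReal.rpow_le_rpow h1 (by norm_num)) h2
  have hNC_le : NC ≤ 2⁻¹ * NG := by
    have hy := young_L2 (T := T) K G hKmeas hGmeas
    calc NC ≤ ((∫⁻ u in Ioo 0 T, K u) ^ (2:ℝ) * ∫⁻ s in Ioo 0 T, G s ^ (2:ℝ)) ^ ((1:ℝ)/2) :=
          ENNReal.rpow_le_rpow hy (by norm_num)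
      _ = (∫⁻ u in Ioo 0 T, K u) * NG := by
          rw [ENNReal.mul_rpow_of_nonneg _ _ (by norm_num : (0:ℝ) ≤ 1/2),
            ← ENNReal.rpow_mul]
          norm_num [hNG]
          rfl
      _ ≤ 2⁻¹ * NG := mul_le_mul_left hKA _
  have hNFeq : eLpNorm f 2 μ = NF := hnorm f hf0
  have hNHeq : eLpNorm h 2 μ = NH := hnorm h hh0
  have hNFfin : NF ≠ ∞ := by
    rw [← hNFeq]
    exact hfL2.eLpNorm_lt_top.ne
  have hGF : ∀ᵐ t ∂μ, G t ≤ F t := by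
    filter_upwards [ae_restrict_mem measurableSet_Ioo] with t ht
    apply ENNReal.ofReal_le_ofReal
    have he : Real.exp (-lam * t) ≤ 1 := Real.exp_le_one_iff.2 (by nlinarith [ht.1])
    nlinarith [hf0 t, Real.exp_pos (-lam * t)]
  have hNG_le_NF : NG ≤ NF := by
    apply ENNReal.rpow_le_rpow _ (by norm_num)
    exact lintegral_mono_ae (hGF.mono fun t ht => ENNReal.rpow_le_rpow ht (by norm_num))
  have hNGfin : NG ≠ ∞ := fun hcon => hNFfin (top_le_iff.1 (hcon ▸ hNG_le_NF))
  -- absorption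
  have habs : NG ≤ 2 * NH := by
    have h1 : 2⁻¹ * NG + 2⁻¹ * NG = NG := by
      rw [← add_mul, ENNReal.inv_two_add_inv_two, one_mul]
    have h2 : 2⁻¹ * NG + 2⁻¹ * NG ≤ NH + 2⁻¹ * NG := by
      rw [h1]; exact le_trans hNG_le (add_le_add_right hNC_le _)
    have h3 : 2⁻¹ * NG ≤ NH :=
      (ENNReal.add_le_add_iff_right (by
        exact ENNReal.mul_ne_top (by norm_num) hNGfin)).1 h2
    calc NG = 2 * (2⁻¹ * NG) := by
          rw [← mul_assoc, ENNReal.mul_inv_cancel (by norm_num) (by norm_num), one_mul]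
      _ ≤ 2 * NH := mul_le_mul_right h3 _
  -- unweight
  have hFG : ∀ᵐ t ∂μ, F t ≤ ENNReal.ofReal (Real.exp (lam * T)) * G t := by
    filter_upwards [ae_restrict_mem measurableSet_Ioo] with t ht
    simp only [hGdef, hFdef]
    rw [← ENNReal.ofReal_mul (Real.exp_nonneg _)]
    apply ENNReal.ofReal_le_ofReal
    have h1 : Real.exp (lam * T) * (Real.exp (-lam * t) * f t)
        = Real.exp (lam * (T - t)) * f t := by
      rw [← mul_assoc, ← Real.exp_add]; ring_nf
    rw [h1]
    have h2 : (1:ℝ) ≤ Real.exp (lam * (T - t)) :=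
      Real.one_le_exp (by nlinarith [ht.2, hlam0])
    nlinarith [hf0 t]
  have hNF_le : NF ≤ ENNReal.ofReal (Real.exp (lam * T)) * NG := by
    have h1 : ∫⁻ t, F t ^ (2:ℝ) ∂μ
        ≤ ∫⁻ t, (ENNReal.ofReal (Real.exp (lam * T)) * G t) ^ (2:ℝ) ∂μ :=
      lintegral_mono_ae (hFG.mono fun t ht => ENNReal.rpow_le_rpow ht (by norm_num))
    have h2 : ∫⁻ t, (ENNReal.ofReal (Real.exp (lam * T)) * G t) ^ (2:ℝ) ∂μ
        = ENNReal.ofReal (Real.exp (lam * T)) ^ (2:ℝ) * ∫⁻ t, G t ^ (2:ℝ) ∂μ := by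
      rw [← lintegral_const_mul _ (hGmeas.pow_const _)]
      apply lintegral_congr; intro t
      rw [ENNReal.mul_rpow_of_nonneg _ _ (by norm_num : (0:ℝ) ≤ 2)]
    calc NF ≤ (ENNReal.ofReal (Real.exp (lam * T)) ^ (2:ℝ) * ∫⁻ t, G t ^ (2:ℝ) ∂μ) ^ ((1:ℝ)/2) := by
          rw [← h2]; exact ENNReal.rpow_le_rpow h1 (by norm_num)
      _ = ENNReal.ofReal (Real.exp (lam * T)) * NG := by
          rw [ENNReal.mul_rpow_of_nonneg _ _ (by norm_num : (0:ℝ) ≤ 1/2),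
            ← ENNReal.rpow_mul]
          norm_num [hNG]
  rw [hNFeq, hNHeq]
  calc NF ≤ ENNReal.ofReal (Real.exp (lam * T)) * NG := hNF_le
    _ ≤ ENNReal.ofReal (Real.exp (lam * T)) * (2 * NH) := mul_le_mul_right habs _
    _ = ENNReal.ofReal (2 * Real.exp (lam * T)) * NH := by
        rw [ENNReal.ofReal_mul (by norm_num : (0:ℝ) ≤ 2)]
        rw [ENNReal.ofReal_ofNat]
        ring
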